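/- Let γ ∈ (−1,1), K ≥ 0 and a > 0. Let u : [0,a] → ℝ be continuous, twice continuously differentiable on (0,a), and assume that (d/dy)(y^γ u'(y)) ≤ K y^γ for every y ∈ (0,a) and that lim sup_{y → 0⁺} y^γ u'(y) ≤ 0. Then y^γ u'(y) ≤ (K/(1+γ)) y^{1+γ} for all y ∈ (0,a), and consequently u(y) − u(0) ≤ (K/(2(1+γ))) y² for all y ∈ [0,a]. -/

import Mathlib

open Filter Set Topology

/-! The flux `F(y) = y^γ u'(y)` has derivative at most that of `G(y) = K/(1+γ) · y^{1+γ}`, and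
`G → 0` at `0⁺` because `1 + γ > 0`. So `F - G` is antitone on `(0, a)` with nonpositive `limsup`
at `0⁺`, hence `F ≤ G`. Dividing by `y^γ > 0` gives `u'(y) ≤ K/(1+γ) · y`, and the same comparison
argument, now with `K/(2(1+γ)) · y²` on `[0, a]` where `u` is continuous up to `0`, integrates this. -/

theorem antitoneOn_sub_of_deriv_le {D : Set ℝ} (hD : Convex ℝ D) {f g : ℝ → ℝ}
    (hf : ContinuousOn f D) (hf' : DifferentiableOn ℝ f (interior D))
    (hg : ContinuousOn g D) (hg' : DifferentiableOn ℝ g (interior D))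
    (hle : ∀ x ∈ interior D, deriv f x ≤ deriv g x) :
    AntitoneOn (fun x => f x - g x) D := by
  refine antitoneOn_of_deriv_nonpos hD (hf.sub hg) (hf'.sub hg') fun x hx => ?_
  have hx_nhds : interior D ∈ 𝓝 x := isOpen_interior.mem_nhds hx
  rw [deriv_fun_sub (hf'.differentiableAt hx_nhds) (hg'.differentiableAt hx_nhds)]
  linarith [hle x hx]

theorem AntitoneOn.nonpos_of_eventually_le_nhdsGT {f : ℝ → ℝ} {b c : ℝ}
    (hf : AntitoneOn f (Ioo b c)) (hlim : ∀ ε > 0, ∀ᶠ x in 𝓝[>] b, f x ≤ ε) :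
    ∀ y ∈ Ioo b c, f y ≤ 0 := by
  intro y hy
  refine le_of_forall_pos_le_add fun ε hε => ?_
  obtain ⟨x, hfx, hx⟩ := ((hlim ε hε).and (Ioo_mem_nhdsGT hy.1)).exists
  have hx_mem : x ∈ Ioo b c := ⟨hx.1, hx.2.trans hy.2⟩
  linarith [hf hx_mem hy hx.2.le]

theorem le_of_deriv_le_of_eventually_le_nhdsGT {f g : ℝ → ℝ} {b c : ℝ}
    (hf : DifferentiableOn ℝ f (Ioo b c)) (hg : DifferentiableOn ℝ g (Ioo b c))
    (hle : ∀ x ∈ Ioo b c, deriv f x ≤ deriv g x)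
    (hf_lim : ∀ ε > 0, ∀ᶠ x in 𝓝[>] b, f x ≤ ε) (hg_lim : Tendsto g (𝓝[>] b) (𝓝 0)) :
    ∀ y ∈ Ioo b c, f y ≤ g y := by
  have hanti : AntitoneOn (fun x => f x - g x) (Ioo b c) := by
    refine antitoneOn_sub_of_deriv_le (convex_Ioo b c) hf.continuousOn ?_ hg.continuousOn ?_ ?_ <;>
      rw [interior_Ioo] <;> assumption
  have hlim : ∀ ε > 0, ∀ᶠ x in 𝓝[>] b, f x - g x ≤ ε := by
    intro ε hε
    have hg_ge : ∀ᶠ x in 𝓝[>] b, -(ε / 2) < g x :=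
      hg_lim.eventually (lt_mem_nhds (by linarith))
    filter_upwards [hf_lim (ε / 2) (by linarith), hg_ge] with x hfx hgx
    linarith
  intro y hy
  linarith [hanti.nonpos_of_eventually_le_nhdsGT hlim y hy]

theorem hasDerivAt_const_mul_rpow_add_one_div {γ K y : ℝ} (hγ : 1 + γ ≠ 0) (hy : y ≠ 0) :
    HasDerivAt (fun z => K / (1 + γ) * z ^ (1 + γ)) (K * y ^ γ) y := by
  refine ((Real.hasDerivAt_rpow_const (p := 1 + γ) (Or.inl hy)).const_mul
    (K / (1 + γ))).congr_deriv ?_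
  rw [add_sub_cancel_left]
  field_simp

theorem tendsto_const_mul_rpow_nhdsGT_zero {p : ℝ} (hp : 0 < p) (C : ℝ) :
    Tendsto (fun z : ℝ => C * z ^ p) (𝓝[>] 0) (𝓝 0) := by
  have hcont : ContinuousAt (fun z : ℝ => C * z ^ p) 0 :=
    (Real.continuousAt_rpow_const 0 p (Or.inr hp.le)).const_mul C
  simpa [Real.zero_rpow hp.ne'] using hcont.tendsto.mono_left nhdsWithin_le_nhds

theorem sub_le_half_mul_sq_of_deriv_le {u : ℝ → ℝ} {a C : ℝ} (hu : ContinuousOn u (Icc 0 a))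
    (hu' : DifferentiableOn ℝ u (Ioo 0 a)) (hle : ∀ x ∈ Ioo 0 a, deriv u x ≤ C * x) :
    ∀ y ∈ Icc 0 a, u y - u 0 ≤ C / 2 * y ^ 2 := by
  have hsq : ∀ x : ℝ, HasDerivAt (fun z : ℝ => C / 2 * z ^ 2) (C * x) x := fun x =>
    ((hasDerivAt_pow 2 x).const_mul (C / 2)).congr_deriv (by ring)
  have hanti : AntitoneOn (fun z => u z - C / 2 * z ^ 2) (Icc 0 a) := by
    refine antitoneOn_sub_of_deriv_le (convex_Icc 0 a) hu (by rwa [interior_Icc]) (by fun_prop)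
      (by fun_prop) ?_
    rw [interior_Icc]
    exact fun x hx => (hsq x).deriv ▸ hle x hx
  intro y hy
  have := hanti ⟨le_rfl, hy.1.trans hy.2⟩ hy hy.1
  norm_num at this
  linarith

theorem stmt_11 (γ K a : ℝ) (hγ : γ ∈ Set.Ioo (-1 : ℝ) 1)
    (u : ℝ → ℝ) (hu : ContinuousOn u (Set.Icc 0 a)) (hu2 : ContDiffOn ℝ 2 u (Set.Ioo 0 a))
    (hineq : ∀ y ∈ Set.Ioo (0 : ℝ) a, deriv (fun z => z ^ γ * deriv u z) y ≤ K * y ^ γ)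
    -- limsup_{y→0⁺} y^γ u'(y) ≤ 0:
    (hflux : ∀ ε > (0 : ℝ), ∀ᶠ y in nhdsWithin (0 : ℝ) (Set.Ioi 0),
      y ^ γ * deriv u y ≤ ε) :
    (∀ y ∈ Set.Ioo (0 : ℝ) a, y ^ γ * deriv u y ≤ K / (1 + γ) * y ^ (1 + γ)) ∧
    (∀ y ∈ Set.Icc (0 : ℝ) a, u y - u 0 ≤ K / (2 * (1 + γ)) * y ^ 2) := by
  have hγ₀ : 0 < 1 + γ := by linarith [hγ.1]
  have hud : DifferentiableOn ℝ u (Ioo 0 a) := hu2.differentiableOn (by norm_num)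
  have hdu : DifferentiableOn ℝ (deriv u) (Ioo 0 a) :=
    (hu2.deriv_of_isOpen (m := 1) isOpen_Ioo (by norm_num)).differentiableOn (by norm_num)
  have hcomp : ∀ y ∈ Ioo (0 : ℝ) a,
      HasDerivAt (fun z => K / (1 + γ) * z ^ (1 + γ)) (K * y ^ γ) y :=
    fun y hy => hasDerivAt_const_mul_rpow_add_one_div hγ₀.ne' hy.1.ne'
  have hflux_bound : ∀ y ∈ Ioo (0 : ℝ) a, y ^ γ * deriv u y ≤ K / (1 + γ) * y ^ (1 + γ) :=
    le_of_deriv_le_of_eventually_le_nhdsGT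
      (fun y hy => ((Real.differentiableAt_rpow_const_of_ne γ hy.1.ne').mul
        ((hdu y hy).differentiableAt (isOpen_Ioo.mem_nhds hy))).differentiableWithinAt)
      (fun y hy => (hcomp y hy).differentiableAt.differentiableWithinAt)
      (fun y hy => (hcomp y hy).deriv ▸ hineq y hy) hflux
      (tendsto_const_mul_rpow_nhdsGT_zero hγ₀ _)
  refine ⟨hflux_bound, ?_⟩
  rw [mul_comm 2, ← div_div]
  refine sub_le_half_mul_sq_of_deriv_le hu hud fun x hx => ?_
  have hpow : x ^ (1 + γ) = x ^ γ * x := by rw [Real.rpow_add hx.1, Real.rpow_one, mul_comm]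
  have hx_bound := hflux_bound x hx
  rw [hpow, mul_left_comm] at hx_bound
  exact le_of_mul_le_mul_left hx_bound (Real.rpow_pos_of_pos hx.1 γ)
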